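/- arXiv:2002.10157 — 3 statements merged into one kernel-verified Lean document; each statement's English description precedes it below -/
import Mathlib

section
/- Let δ ∈ (0,1] and θ ≥ 0. Let Λ : ℝ → [0,∞) be measurable and let λ = λ^ℜ + iλ^ℑ : ℝ × P₂(ℝ) → ℂ be such that, for every k ∈ ℝ and all μ, ν ∈ P₂(ℝ), one has |λ(k,μ)| ≤ Λ(k) and |λ(k,μ) − λ(k,ν)| ≤ Λ(k)·d_TV(μ,ν)^δ. Then there exist a constant C > 0 depending only on δ (in particular independent of k, μ, ν and θ) and a function λ̃ = λ̃^ℜ + iλ̃^ℑ : ℝ × P₂(ℝ) → ℂ such that for every k ∈ ℝ and all μ, ν ∈ P₂(ℝ): |λ(k,μ) − λ̃(k,μ)| ≤ C·⟨k⟩^{−θδ}·Λ(k) and |λ̃(k,μ) − λ̃(k,ν)| ≤ C·⟨k⟩^{θ(1−δ)}·Λ(k)·d_TV(μ,ν). -/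
open MeasureTheory

/-- The "Japanese bracket" `⟨k⟩ = (1+k²)^{1/2}`. -/
noncomputable def jap (k : ℝ) : ℝ := Real.sqrt (1 + k ^ 2)

/-- Borel probability measures on ℝ with finite second moment. -/
def P2 : Type := {μ : Measure ℝ // IsProbabilityMeasure μ ∧ Integrable (fun x => x ^ 2) μ}

/-- Total variation distance `d_TV(μ,ν) = 2 sup_A |μ(A) − ν(A)|`. -/
noncomputable def dTV (μ ν : Measure ℝ) : ℝ :=
  2 * ⨆ A : {A : Set ℝ // MeasurableSet A}, |(μ A.1).toReal - (ν A.1).toReal|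

/-!
Each of `Re λ(k, ·)` and `Im λ(k, ·)` is `δ`-Hölder for `d_TV` with constant `Λ(k)`, and is replaced
by its inf-convolution `x ↦ inf_y (f y + L d(x, y))` with the cone of slope `L = Λ(k) ε^(δ-1)`,
where `ε = ⟨k⟩^(-θ)`. The inf-convolution is `L`-Lipschitz, lies below `f`, and stays within
`Λ(k) ε^δ` of it because `d^δ ≤ ε^δ + ε^(δ-1) d` for all `d ≥ 0`.
-/

lemma bddAbove_range_abs_sub_measure (μ ν : Measure ℝ) [IsFiniteMeasure μ] [IsFiniteMeasure ν] :
    BddAbove (Set.range fun A : {A : Set ℝ // MeasurableSet A} =>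
      |(μ A.1).toReal - (ν A.1).toReal|) := by
  refine ⟨μ.real Set.univ + ν.real Set.univ, ?_⟩
  rintro _ ⟨A, rfl⟩
  change |μ.real A.1 - ν.real A.1| ≤ _
  have hμ : μ.real A.1 ≤ μ.real Set.univ := measureReal_mono (Set.subset_univ _)
  have hν : ν.real A.1 ≤ ν.real Set.univ := measureReal_mono (Set.subset_univ _)
  have hμ0 : 0 ≤ μ.real A.1 := measureReal_nonneg
  have hν0 : 0 ≤ ν.real A.1 := measureReal_nonneg
  exact abs_sub_le_iff.2 ⟨by linarith, by linarith⟩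

lemma dTV_self (μ : Measure ℝ) : dTV μ μ = 0 := by
  simp [dTV]

lemma dTV_comm (μ ν : Measure ℝ) : dTV μ ν = dTV ν μ := by
  simp only [dTV, abs_sub_comm]

lemma dTV_triangle (μ ν ρ : Measure ℝ) [IsFiniteMeasure μ] [IsFiniteMeasure ν]
    [IsFiniteMeasure ρ] : dTV μ ρ ≤ dTV μ ν + dTV ν ρ := by
  rw [dTV, dTV, dTV, ← mul_add]
  gcongr
  refine ciSup_le fun A => (abs_sub_le _ (ν A.1).toReal _).trans ?_
  exact add_le_add (le_ciSup (bddAbove_range_abs_sub_measure μ ν) A)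
    (le_ciSup (bddAbove_range_abs_sub_measure ν ρ) A)

noncomputable instance : PseudoMetricSpace P2 where
  dist μ ν := dTV μ.1 ν.1
  dist_self μ := dTV_self μ.1
  dist_comm μ ν := dTV_comm μ.1 ν.1
  dist_triangle μ ν ρ :=
    haveI := μ.2.1; haveI := ν.2.1; haveI := ρ.2.1; dTV_triangle μ.1 ν.1 ρ.1

lemma P2.dist_eq (μ ν : P2) : dist μ ν = dTV μ.1 ν.1 := rfl

lemma rpow_le_rpow_add_rpow_sub_one_mul {δ ε d : ℝ} (hδ0 : 0 ≤ δ) (hδ1 : δ ≤ 1) (hε : 0 < ε)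
    (hd : 0 ≤ d) : d ^ δ ≤ ε ^ δ + ε ^ (δ - 1) * d := by
  rcases le_total d ε with hdε | hεd
  · have : 0 ≤ ε ^ (δ - 1) * d := mul_nonneg (Real.rpow_nonneg hε.le _) hd
    linarith [Real.rpow_le_rpow hd hdε hδ0]
  · have hd0 : 0 < d := hε.trans_le hεd
    calc d ^ δ = d ^ (δ - 1) * d := by rw [← Real.rpow_add_one hd0.ne']; ring_nf
      _ ≤ ε ^ (δ - 1) * d :=
          mul_le_mul_of_nonneg_right (Real.rpow_le_rpow_of_nonpos hε hεd (sub_nonpos.2 hδ1)) hd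
      _ ≤ ε ^ δ + ε ^ (δ - 1) * d := le_add_of_nonneg_left (Real.rpow_nonneg hε.le _)

section InfConvolution

variable {X : Type*} [PseudoMetricSpace X] {f : X → ℝ} {L c : ℝ}

noncomputable def infConv (f : X → ℝ) (L : ℝ) (x : X) : ℝ :=
  ⨅ y, f y + L * dist x y

lemma bddBelow_range_add_mul_dist (hf : ∀ x y, f x - c ≤ f y + L * dist x y) (x : X) :
    BddBelow (Set.range fun y => f y + L * dist x y) :=
  ⟨f x - c, by rintro _ ⟨y, rfl⟩; exact hf x y⟩

lemma infConv_le_self (hf : ∀ x y, f x - c ≤ f y + L * dist x y) (x : X) :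
    infConv f L x ≤ f x := by
  simpa [infConv] using ciInf_le (bddBelow_range_add_mul_dist hf x) x

lemma sub_le_infConv (hf : ∀ x y, f x - c ≤ f y + L * dist x y) (x : X) :
    f x - c ≤ infConv f L x :=
  have : Nonempty X := ⟨x⟩
  le_ciInf (hf x)

lemma infConv_le_add_mul_dist (hf : ∀ x y, f x - c ≤ f y + L * dist x y) (hL : 0 ≤ L)
    (x y : X) : infConv f L x ≤ infConv f L y + L * dist x y := by
  have : Nonempty X := ⟨x⟩
  rw [← sub_le_iff_le_add]
  refine le_ciInf fun z => ?_
  have hxz : infConv f L x ≤ f z + L * dist x z := ciInf_le (bddBelow_range_add_mul_dist hf x) z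
  have htri : L * dist x z ≤ L * dist x y + L * dist y z := by
    rw [← mul_add]; exact mul_le_mul_of_nonneg_left (dist_triangle x y z) hL
  linarith

lemma abs_infConv_sub_le (hf : ∀ x y, f x - c ≤ f y + L * dist x y) (hL : 0 ≤ L) (x y : X) :
    |infConv f L x - infConv f L y| ≤ L * dist x y := by
  have hxy := infConv_le_add_mul_dist hf hL x y
  have hyx := infConv_le_add_mul_dist hf hL y x
  rw [dist_comm] at hyx
  exact abs_sub_le_iff.2 ⟨by linarith, by linarith⟩

theorem exists_lipschitz_approx_of_holder {A δ ε : ℝ} (hA : 0 ≤ A) (hδ0 : 0 ≤ δ) (hδ1 : δ ≤ 1)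
    (hε : 0 < ε) (hf : ∀ x y, |f x - f y| ≤ A * dist x y ^ δ) :
    ∃ g : X → ℝ, (∀ x, |f x - g x| ≤ A * ε ^ δ) ∧
      ∀ x y, |g x - g y| ≤ A * ε ^ (δ - 1) * dist x y := by
  have hcone : ∀ x y, f x - A * ε ^ δ ≤ f y + A * ε ^ (δ - 1) * dist x y := fun x y => by
    have hholder := (le_abs_self _).trans (hf x y)
    have hkey := mul_le_mul_of_nonneg_left
      (rpow_le_rpow_add_rpow_sub_one_mul hδ0 hδ1 hε (dist_nonneg (x := x) (y := y))) hA
    linarith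
  have hL : 0 ≤ A * ε ^ (δ - 1) := mul_nonneg hA (Real.rpow_nonneg hε.le _)
  refine ⟨infConv f (A * ε ^ (δ - 1)), fun x => ?_, abs_infConv_sub_le hcone hL⟩
  have hle := infConv_le_self hcone x
  have hge := sub_le_infConv hcone x
  exact abs_sub_le_iff.2 ⟨by linarith, by linarith [mul_nonneg hA (Real.rpow_nonneg hε.le δ)]⟩

theorem exists_lipschitz_approx_of_holder_complex {f : X → ℂ} {A δ ε : ℝ} (hA : 0 ≤ A)
    (hδ0 : 0 ≤ δ) (hδ1 : δ ≤ 1) (hε : 0 < ε) (hf : ∀ x y, ‖f x - f y‖ ≤ A * dist x y ^ δ) :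
    ∃ g : X → ℂ, (∀ x, ‖f x - g x‖ ≤ 2 * A * ε ^ δ) ∧
      ∀ x y, ‖g x - g y‖ ≤ 2 * A * ε ^ (δ - 1) * dist x y := by
  obtain ⟨gr, hgr_approx, hgr_lip⟩ := exists_lipschitz_approx_of_holder (f := fun x => (f x).re)
    hA hδ0 hδ1 hε fun x y => by simpa using (Complex.abs_re_le_norm _).trans (hf x y)
  obtain ⟨gi, hgi_approx, hgi_lip⟩ := exists_lipschitz_approx_of_holder (f := fun x => (f x).im)
    hA hδ0 hδ1 hε fun x y => by simpa using (Complex.abs_im_le_norm _).trans (hf x y)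
  have hnorm (z w : ℂ) : ‖z - w‖ ≤ |z.re - w.re| + |z.im - w.im| := by
    simpa using Complex.norm_le_abs_re_add_abs_im (z - w)
  refine ⟨fun x => ⟨gr x, gi x⟩, fun x => ?_, fun x y => ?_⟩
  · linarith [hnorm (f x) ⟨gr x, gi x⟩, hgr_approx x, hgi_approx x]
  · linarith [hnorm ⟨gr x, gi x⟩ ⟨gr y, gi y⟩, hgr_lip x y, hgi_lip x y]

end InfConvolution

lemma jap_pos (k : ℝ) : 0 < jap k :=
  Real.sqrt_pos.2 (by positivity)

theorem stmt0 (δ : ℝ) (hδ0 : 0 < δ) (hδ1 : δ ≤ 1) :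
    ∃ C > (0:ℝ), ∀ θ : ℝ, 0 ≤ θ →
      ∀ Λ : ℝ → ℝ, Measurable Λ → (∀ k, 0 ≤ Λ k) →
      ∀ lam : ℝ → P2 → ℂ,
        (∀ k μ, ‖lam k μ‖ ≤ Λ k) →
        (∀ (k : ℝ) (μ ν : P2), ‖lam k μ - lam k ν‖ ≤ Λ k * dTV μ.1 ν.1 ^ δ) →
        ∃ lam' : ℝ → P2 → ℂ,
          (∀ (k : ℝ) (μ : P2),
            ‖lam k μ - lam' k μ‖ ≤ C * jap k ^ (-(θ * δ)) * Λ k) ∧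
          (∀ (k : ℝ) (μ ν : P2),
            ‖lam' k μ - lam' k ν‖
              ≤ C * jap k ^ (θ * (1 - δ)) * Λ k * dTV μ.1 ν.1) := by
  refine ⟨2, two_pos, fun θ _ Λ _ hΛ lam _ hholder => ?_⟩
  have hregularize (k : ℝ) := exists_lipschitz_approx_of_holder_complex (hΛ k) hδ0.le hδ1
    (Real.rpow_pos_of_pos (jap_pos k) (-θ)) (hholder k)
  choose lam' happrox hlip using hregularize
  have hexp (k a : ℝ) : (jap k ^ (-θ)) ^ a = jap k ^ (-θ * a) :=
    (Real.rpow_mul (jap_pos k).le _ _).symm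
  refine ⟨lam', fun k μ => ?_, fun k μ ν => ?_⟩
  · exact (happrox k μ).trans_eq (by rw [hexp]; ring_nf)
  · exact (hlip k μ ν).trans_eq (by rw [hexp, P2.dist_eq]; ring_nf)
end

section
/- Let ν be a probability kernel from ℝ to ℝ, i.e. for each x ∈ ℝ, ν(x,·) is a Borel probability measure on ℝ and for each Borel set A ⊆ ℝ the map x ↦ ν(x, A) is measurable. Define g : ℝ × (0,1) → ℝ by g(x, u) := sup{ t ∈ ℝ : ν(x, (−∞, t]) ≤ u }. Then: (a) for every u ∈ (0,1), the map x ↦ g(x,u) is Borel-measurable; (b) for every x ∈ ℝ, the map u ↦ g(x,u) is right-continuous with left limits on (0,1); (c) the map (x,u) ↦ g(x,u) is jointly Borel-measurable on ℝ × (0,1). -/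
/-!
Write `F_x` for the cdf of `ν x`. For each `x`, `u ↦ g x u` is monotone on `(0,1)`, so it has
left limits; it is right-continuous because `g x u < w` forces `u < F_x(w)`, and then
`g x v ≤ w` for all `v < F_x(w)`. For measurability, `s ≤ g x u` holds iff `F_x(q) ≤ u` for
every rational `q < s`, so each superlevel set of `g` is a countable intersection of sets
`{F_x(q) ≤ u}`, which are measurable jointly in `(x, u)`.
-/

open MeasureTheory

namespace ProbabilityTheory

open Set Filter Topology

noncomputable def quantile (μ : Measure ℝ) (u : ℝ) : ℝ :=
  sSup {t : ℝ | cdf μ t ≤ u}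

section quantile

variable {μ : Measure ℝ} {u v s w : ℝ}

lemma nonempty_setOf_cdf_le (hu : 0 < u) : {t : ℝ | cdf μ t ≤ u}.Nonempty := by
  obtain ⟨t, ht⟩ := ((tendsto_cdf_atBot μ).eventually_lt_const hu).exists
  exact ⟨t, ht.le⟩

lemma bddAbove_setOf_cdf_le (hu : u < 1) : BddAbove {t : ℝ | cdf μ t ≤ u} := by
  obtain ⟨b, hb⟩ := ((tendsto_cdf_atTop μ).eventually_const_lt hu).exists
  exact ⟨b, fun t ht =>
    le_of_not_gt fun hbt => (hb.trans_le (monotone_cdf μ hbt.le)).not_ge ht⟩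

lemma le_quantile_iff (hu : u ∈ Ioo 0 1) : s ≤ quantile μ u ↔ ∀ t < s, cdf μ t ≤ u := by
  constructor
  · intro hs t hts
    obtain ⟨t', ht', htt'⟩ :=
      exists_lt_of_lt_csSup (nonempty_setOf_cdf_le hu.1) (hts.trans_le hs)
    exact (monotone_cdf μ htt'.le).trans ht'
  · intro h
    refine le_of_forall_lt fun c hc => ?_
    obtain ⟨t, hct, hts⟩ := exists_between hc
    exact hct.trans_le (le_csSup (bddAbove_setOf_cdf_le hu.2) (h t hts))

lemma le_quantile_iff_forall_rat (hu : u ∈ Ioo 0 1) :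
    s ≤ quantile μ u ↔ ∀ q : ℚ, (q : ℝ) < s → cdf μ q ≤ u := by
  rw [le_quantile_iff hu]
  refine ⟨fun h q hq => h q hq, fun h t hts => ?_⟩
  obtain ⟨q, htq, hqs⟩ := exists_rat_btwn hts
  exact (monotone_cdf μ htq.le).trans (h q hqs)

lemma lt_cdf_of_quantile_lt (hu : u < 1) (h : quantile μ u < w) : u < cdf μ w :=
  lt_of_not_ge fun hw => h.not_ge (le_csSup (bddAbove_setOf_cdf_le hu) hw)

lemma quantile_le_of_lt_cdf (hv : 0 < v) (h : v < cdf μ w) : quantile μ v ≤ w :=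
  csSup_le (nonempty_setOf_cdf_le hv) fun _ ht =>
    le_of_not_gt fun hwt => (h.trans_le (monotone_cdf μ hwt.le)).not_ge ht

lemma monotoneOn_quantile : MonotoneOn (quantile μ) (Ioo 0 1) := fun _ hu _ hv huv =>
  csSup_le_csSup (bddAbove_setOf_cdf_le hv.2) (nonempty_setOf_cdf_le hu.1)
    fun _ ht => le_trans ht huv

lemma continuousWithinAt_quantile_Ici (hu : u ∈ Ioo 0 1) :
    ContinuousWithinAt (quantile μ) (Ici u) u := by
  have hIco : Ico u 1 ∈ 𝓝[≥] u := Ico_mem_nhdsGE hu.2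
  refine tendsto_order.2 ⟨fun l hl => ?_, fun m hm => ?_⟩
  · filter_upwards [hIco] with v hv
    exact hl.trans_le (monotoneOn_quantile hu ⟨hu.1.trans_le hv.1, hv.2⟩ hv.1)
  · obtain ⟨w, huw, hwm⟩ := exists_between hm
    have hcdf : Iio (cdf μ w) ∈ 𝓝[≥] u :=
      nhdsWithin_le_nhds (Iio_mem_nhds (lt_cdf_of_quantile_lt hu.2 huw))
    filter_upwards [hIco, hcdf] with v hv hvw
    exact (quantile_le_of_lt_cdf (hu.1.trans_le hv.1) hvw).trans_lt hwm

lemma exists_tendsto_quantile_nhdsLT (hu : u ∈ Ioo 0 1) :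
    ∃ l, Tendsto (quantile μ) (𝓝[<] u) (𝓝 l) := by
  have hsub : Ioo 0 u ⊆ Ioo 0 1 := Ioo_subset_Ioo_right hu.2.le
  refine ⟨_, MonotoneOn.tendsto_nhdsWithin_Ioo_left (nonempty_Ioo.2 hu.1)
    (monotoneOn_quantile.mono hsub) ⟨quantile μ u, ?_⟩⟩
  rintro _ ⟨v, hv, rfl⟩
  exact monotoneOn_quantile (hsub hv) hu hv.2.le

end quantile

lemma measurable_cdf_apply {α : Type*} [MeasurableSpace α] {κ : α → Measure ℝ}
    [∀ a, IsProbabilityMeasure (κ a)]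
    (hκ : ∀ A, MeasurableSet A → Measurable fun a => κ a A) (t : ℝ) :
    Measurable fun a => cdf (κ a) t := by
  simp only [cdf_eq_real, measureReal_def]
  exact (hκ _ measurableSet_Iic).ennreal_toReal

lemma measurable_quantile {α : Type*} [MeasurableSpace α] {κ : α → Measure ℝ}
    (hκ : ∀ t, Measurable fun a => cdf (κ a) t)
    {u : α → ℝ} (hu : Measurable u) (hu01 : ∀ a, u a ∈ Ioo 0 1) :
    Measurable fun a => quantile (κ a) (u a) := by
  refine measurable_of_Ici fun s => ?_
  have hpre : (fun a => quantile (κ a) (u a)) ⁻¹' Ici s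
      = ⋂ (q : ℚ) (_ : (q : ℝ) < s), {a | cdf (κ a) q ≤ u a} := by
    ext a
    simp only [mem_preimage, mem_Ici, mem_iInter, mem_ofPred_eq]
    exact le_quantile_iff_forall_rat (hu01 a)
  rw [hpre]
  exact .iInter fun q => .iInter fun _ => measurableSet_le (hκ q) hu

end ProbabilityTheory

open ProbabilityTheory

theorem stmt15 (ν : ℝ → Measure ℝ)
    (hprob : ∀ x, IsProbabilityMeasure (ν x))
    (hmeas : ∀ A : Set ℝ, MeasurableSet A → Measurable (fun x => ν x A)) :
    let g : ℝ → ℝ → ℝ := fun x u => sSup {t : ℝ | (ν x (Set.Iic t)).toReal ≤ u}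
    -- (a) measurability in x for each fixed u ∈ (0,1)
    (∀ u ∈ Set.Ioo (0:ℝ) 1, Measurable (fun x => g x u)) ∧
    -- (b) right-continuity and existence of left limits in u on (0,1)
    (∀ x : ℝ, ∀ u ∈ Set.Ioo (0:ℝ) 1,
      ContinuousWithinAt (fun v => g x v) (Set.Ici u) u ∧
      ∃ l : ℝ, Filter.Tendsto (fun v => g x v) (nhdsWithin u (Set.Iio u)) (nhds l)) ∧
    -- (c) joint measurability on ℝ × (0,1)
    Measurable (fun p : ℝ × (Set.Ioo (0:ℝ) 1) => g p.1 (p.2 : ℝ)) := by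
  intro g
  have hg : ∀ x u, g x u = quantile (ν x) u := fun x u => by
    simp only [g, quantile, cdf_eq_real, measureReal_def]
  simp only [hg]
  have hcdf := measurable_cdf_apply hmeas
  refine ⟨fun u hu => measurable_quantile hcdf measurable_const fun _ => hu,
    fun x u hu => ⟨continuousWithinAt_quantile_Ici hu, exists_tendsto_quantile_nhdsLT hu⟩, ?_⟩
  exact measurable_quantile (κ := fun p : ℝ × _ => ν p.1)
    (fun t => (hcdf t).comp measurable_fst)
    (measurable_subtype_coe.comp measurable_snd) fun p => p.2.2
end

section
/- Let (Ω, F, ℙ) be a probability space and X, Y : Ω → ℝ random variables, and let κ be a regular version of the conditional distribution of Y given X (a probability kernel from ℝ to ℝ such that for all Borel sets A, B ⊆ ℝ: ℙ(X ∈ A, Y ∈ B) = ∫_A κ(x, B) d(law X)(x)). Let (Ω', F', ℙ') be a probability space carrying a random variable X' : Ω' → ℝ with the same law as X and a random variable U : Ω' → (0,1), uniformly distributed on (0,1) and independent of X'. Define g(x, u) := inf{ t ∈ ℝ : u ≤ κ(x, (−∞, t]) }. Then the pair (X', g(X', U)) has the same law on ℝ² as the pair (X, Y). -/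
/-! Inverse transform sampling, done fibrewise. For a probability measure `ρ` on `ℝ` and
`0 < u < 1`, right continuity of the cdf gives the Galois connection
`quantile ρ u ≤ c ↔ u ≤ ρ (-∞, c]`, so the quantile function pushes the uniform law on `(0,1)`
forward to `ρ`. Applied to `κ x` for every `x`, and combined with the independence of `X'` and
`U`, this shows that `(X', g (X', U))` has law `law X ⊗ κ`, which is the law of `(X, Y)` because
`κ` is a regular conditional distribution of `Y` given `X`. -/

open MeasureTheory Set Filter Topology ProbabilityTheory

theorem StieltjesFunction.csInf_setOf_le_le_iff (f : StieltjesFunction ℝ) {u : ℝ}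
    (hlow : ∃ t, f t < u) (hhigh : ∃ t, u ≤ f t) (c : ℝ) :
    sInf {t | u ≤ f t} ≤ c ↔ u ≤ f c := by
  set S := {t | u ≤ f t}
  have hbdd : BddBelow S := by
    obtain ⟨t₀, ht₀⟩ := hlow
    exact ⟨t₀, fun t ht => (f.mono.reflect_lt (ht₀.trans_le ht)).le⟩
  -- right continuity of `f` puts the infimum itself in `S`
  have hmem : u ≤ f (sInf S) := by
    refine ge_of_tendsto ((f.right_continuous _).mono_left (nhdsWithin_mono _ Ioi_subset_Ici_self))
      (eventually_nhdsWithin_of_forall fun t ht => ?_)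
    obtain ⟨s, hs, hst⟩ := exists_lt_of_csInf_lt hhigh ht
    exact le_trans hs (f.mono hst.le)
  exact ⟨fun h => hmem.trans (f.mono h), fun h => csInf_le hbdd h⟩

theorem Real.volume_restrict_Ioo_Iic {p : ℝ} (hp : p ∈ Icc 0 1) :
    volume.restrict (Ioo 0 1) (Iic p) = ENNReal.ofReal p := by
  rw [Measure.restrict_congr_set Ioo_ae_eq_Ioc, Measure.restrict_apply measurableSet_Iic,
    inter_comm, Ioc_inter_Iic, Real.volume_Ioc, inf_eq_right.2 hp.2, sub_zero]

namespace MeasureTheory.Measure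

noncomputable def quantile (ρ : Measure ℝ) (u : ℝ) : ℝ := sInf {t | u ≤ ρ.real (Iic t)}

variable (ρ : Measure ℝ) [IsProbabilityMeasure ρ]

theorem quantile_le_iff {u : ℝ} (hu : u ∈ Ioo 0 1) (c : ℝ) :
    ρ.quantile u ≤ c ↔ u ≤ ρ.real (Iic c) := by
  simp_rw [quantile, ← cdf_eq_real]
  exact (cdf ρ).csInf_setOf_le_le_iff ((tendsto_cdf_atBot ρ).eventually (gt_mem_nhds hu.1)).exists
    (((tendsto_cdf_atTop ρ).eventually (lt_mem_nhds hu.2)).mono fun _ => le_of_lt).exists c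

theorem monotoneOn_quantile : MonotoneOn ρ.quantile (Ioo 0 1) := fun _ hu _ hv huv =>
  (quantile_le_iff ρ hu _).2 <| huv.trans <| (quantile_le_iff ρ hv _).1 le_rfl

theorem map_quantile_volume_restrict_Ioo : (volume.restrict (Ioo 0 1)).map ρ.quantile = ρ := by
  refine ext_of_Iic _ _ fun c => ?_
  have hpre : ρ.quantile ⁻¹' Iic c =ᵐ[volume.restrict (Ioo 0 1)] Iic (ρ.real (Iic c)) := by
    filter_upwards [ae_restrict_mem measurableSet_Ioo] with u hu
    exact propext (quantile_le_iff ρ hu c)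
  rw [map_apply_of_aemeasurable
      (aemeasurable_restrict_of_monotoneOn measurableSet_Ioo (monotoneOn_quantile ρ))
      measurableSet_Iic, measure_congr hpre,
    Real.volume_restrict_Ioo_Iic ⟨measureReal_nonneg, measureReal_le_one⟩, ofReal_measureReal]

end MeasureTheory.Measure

namespace ProbabilityTheory.Kernel

variable {α : Type*} [MeasurableSpace α] (κ : Kernel α ℝ) [IsMarkovKernel κ]

/-- Set to `0` outside `0 < u < 1`, where the infimum is junk, so that it is jointly
measurable. -/
noncomputable def quantile (p : α × ℝ) : ℝ :=
  if p.2 ∈ Ioo 0 1 then (κ p.1).quantile p.2 else 0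

theorem measurable_quantile : Measurable κ.quantile := by
  refine measurable_of_Iic fun c => ?_
  have hpre : κ.quantile ⁻¹' Iic c = {p | p.2 ∈ Ioo 0 1}.ite
      {p | p.2 ≤ (κ p.1).real (Iic c)} {_p | 0 ≤ c} := by
    ext ⟨x, u⟩
    by_cases hu : u ∈ Ioo 0 1 <;>
      simp [Set.ite, quantile, hu, Measure.quantile_le_iff, -mem_Ioo]
  rw [hpre]
  exact (measurable_snd measurableSet_Ioo).ite (measurableSet_le measurable_snd
    ((κ.measurable_coe measurableSet_Iic).ennreal_toReal.comp measurable_fst)) (.const _)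

theorem map_quantile_volume_restrict_Ioo (x : α) :
    (volume.restrict (Ioo 0 1)).map (fun u => κ.quantile (x, u)) = κ x := by
  rw [← (κ x).map_quantile_volume_restrict_Ioo]
  refine Measure.map_congr ?_
  filter_upwards [ae_restrict_mem measurableSet_Ioo] with u hu
  simp [quantile, hu]

theorem map_prod_quantile_eq_compProd (μ : Measure α) [IsFiniteMeasure μ] :
    (μ.prod (volume.restrict (Ioo 0 1))).map (fun p => (p.1, κ.quantile p)) = μ ⊗ₘ κ := by
  have hmeas : Measurable fun p : α × ℝ => (p.1, κ.quantile p) :=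
    measurable_fst.prodMk κ.measurable_quantile
  refine Measure.ext_prod fun {s t} hs ht => ?_
  rw [Measure.map_apply hmeas (hs.prod ht), Measure.prod_apply (hmeas (hs.prod ht)),
    Measure.compProd_apply_prod hs ht, ← lintegral_indicator hs]
  refine lintegral_congr fun x => ?_
  rw [preimage_preimage, mk_preimage_prod]
  by_cases hx : x ∈ s
  · rw [preimage_const_of_mem hx, univ_inter, indicator_of_mem hx,
      ← Measure.map_apply (f := fun u => κ.quantile (x, u))
        (κ.measurable_quantile.comp measurable_prodMk_left) ht,
      κ.map_quantile_volume_restrict_Ioo]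
  · rw [preimage_const_of_notMem hx, empty_inter, measure_empty, indicator_of_notMem hx]

end ProbabilityTheory.Kernel

theorem ProbabilityTheory.map_prodMk_eq_compProd {Ω α β : Type*} [MeasurableSpace Ω]
    [MeasurableSpace α] [MeasurableSpace β] {P : Measure Ω} [IsFiniteMeasure P]
    {X : Ω → α} {Y : Ω → β} (hX : Measurable X) (hY : Measurable Y) {κ : Kernel α β}
    [IsSFiniteKernel κ]
    (hκ : ∀ A B, MeasurableSet A → MeasurableSet B →
      P (X ⁻¹' A ∩ Y ⁻¹' B) = ∫⁻ x in A, κ x B ∂(P.map X)) :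
    P.map (fun ω => (X ω, Y ω)) = P.map X ⊗ₘ κ :=
  Measure.ext_prod fun hs ht => by
    rw [Measure.map_apply (hX.prodMk hY) (hs.prod ht), mk_preimage_prod, hκ _ _ hs ht,
      Measure.compProd_apply_prod hs ht]

theorem stmt16 {Ω Ω' : Type*} [MeasurableSpace Ω] [MeasurableSpace Ω']
    (P : Measure Ω) [IsProbabilityMeasure P]
    (P' : Measure Ω') [IsProbabilityMeasure P']
    (X Y : Ω → ℝ) (hX : Measurable X) (hY : Measurable Y)
    -- κ is a probability kernel from ℝ to ℝ ...
    (κ : ℝ → Measure ℝ) (hκprob : ∀ x, IsProbabilityMeasure (κ x))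
    (hκmeas : ∀ B : Set ℝ, MeasurableSet B → Measurable (fun x => κ x B))
    -- ... which is a regular version of the conditional distribution of Y given X
    (hreg : ∀ A B : Set ℝ, MeasurableSet A → MeasurableSet B →
      P (X ⁻¹' A ∩ Y ⁻¹' B) = ∫⁻ x in A, κ x B ∂(P.map X))
    (X' : Ω' → ℝ) (hX' : Measurable X') (hlawX : P'.map X' = P.map X)
    (U : Ω' → ℝ) (hU : Measurable U)
    (hUlaw : P'.map U = volume.restrict (Set.Ioo (0:ℝ) 1))
    (hindep : ProbabilityTheory.IndepFun X' U P') :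
    P'.map (fun ω => (X' ω, sInf {t : ℝ | U ω ≤ (κ (X' ω) (Set.Iic t)).toReal}))
      = P.map (fun ω => (X ω, Y ω)) := by
  let η : Kernel ℝ ℝ := ⟨κ, Measure.measurable_of_measurable_coe κ hκmeas⟩
  have : IsMarkovKernel η := ⟨hκprob⟩
  have hU01 : ∀ᵐ ω ∂P', U ω ∈ Ioo 0 1 := by
    refine ae_of_ae_map hU.aemeasurable ?_
    rw [hUlaw]
    exact ae_restrict_mem measurableSet_Ioo
  calc P'.map (fun ω => (X' ω, sInf {t : ℝ | U ω ≤ (κ (X' ω) (Set.Iic t)).toReal}))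
      = (P'.map fun ω => (X' ω, U ω)).map (fun p => (p.1, η.quantile p)) := by
        rw [Measure.map_map (measurable_fst.prodMk η.measurable_quantile) (hX'.prodMk hU)]
        refine Measure.map_congr ?_
        filter_upwards [hU01] with ω hω
        simp only [Function.comp_apply, Kernel.quantile, if_pos hω]
        rfl
    _ = ((P.map X).prod (volume.restrict (Ioo 0 1))).map (fun p => (p.1, η.quantile p)) := by
        rw [(indepFun_iff_map_prod_eq_prod_map_map hX'.aemeasurable hU.aemeasurable).1 hindep,
          hlawX, hUlaw]
    _ = P.map X ⊗ₘ η := η.map_prod_quantile_eq_compProd _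
    _ = P.map (fun ω => (X ω, Y ω)) := (map_prodMk_eq_compProd hX hY hreg).symm
end
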